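/- Suppose a distribution p on a finite product space satisfies the log-linear restrictions of Proposition 2 for every edge-context element of a contextual Markov network structure (G, C), together with φ_A ≡ 0 whenever A contains a pair of nodes not joined by an edge of G. Then p satisfies the pairwise Markov property of G, i.e. every contextual Markov network distribution is a Markov network distribution with respect to its underlying graph. -/
import Mathlib


open Finset

variable {V : Type*} [Fintype V] [DecidableEq V] {X : V → Type*}
  [∀ j, Fintype (X j)] [∀ j, DecidableEq (X j)]

/-- Marginal probability of the event that the coordinates in `S` agree with `x`. -/
noncomputable def marg (p : (∀ j, X j) → ℝ) (S : Finset V) (x : ∀ j, X j) : ℝ :=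
  ∑ y ∈ Finset.univ.filter (fun y : ∀ j, X j => ∀ j ∈ S, y j = x j), p y

/-- Context-specific independence `X_A ⊥ X_B | x_C, X_S` in cross-multiplied form. -/
def CSI (p : (∀ j, X j) → ℝ) (A B C S : Finset V) (xC : ∀ j, X j) : Prop :=
  ∀ x : ∀ j, X j, (∀ j ∈ C, x j = xC j) →
    marg p (A ∪ B ∪ C ∪ S) x * marg p (C ∪ S) x
      = marg p (A ∪ C ∪ S) x * marg p (B ∪ C ∪ S) x

/-- Conditional independence `X_A ⊥ X_B | X_S` in cross-multiplied form. -/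
def CondIndep (p : (∀ j, X j) → ℝ) (A B S : Finset V) : Prop :=
  ∀ x : ∀ j, X j,
    marg p (A ∪ B ∪ S) x * marg p S x = marg p (A ∪ S) x * marg p (B ∪ S) x

/-- The sum `Σ_{A ⊆ cn} φ_{A∪{i,j}}(x'_A, x_i, x_j)` appearing in Proposition 2. -/
noncomputable def ctxtSum [∀ j, Zero (X j)] (φ : Finset V → (∀ j, X j) → ℝ)
    (i j : V) (cn : Finset V) (x' : ∀ l, X l) (xi : X i) (xj : X j) : ℝ :=
  ∑ A ∈ cn.powerset,
    φ (insert i (insert j A)) (Function.update (Function.update x' i xi) j xj)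

section Aux

variable (p : (∀ j, X j) → ℝ)

lemma marg_univ (x : ∀ j, X j) : marg p Finset.univ x = p x := by
  unfold marg
  have h : Finset.univ.filter (fun y : ∀ j, X j => ∀ j ∈ Finset.univ, y j = x j) = {x} := by
    ext y
    simp [funext_iff]
  rw [h, Finset.sum_singleton]

lemma marg_compl_one (l : V) (x : ∀ j, X j) :
    marg p (Finset.univ \ {l}) x = ∑ b : X l, p (Function.update x l b) := by
  unfold marg
  have key : ∀ y ∈ Finset.univ.filter (fun y : ∀ j, X j => ∀ j ∈ Finset.univ \ {l}, y j = x j),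
      Function.update x l (y l) = y := by
    intro y hy
    simp only [Finset.mem_filter, Finset.mem_univ, true_and, Finset.mem_sdiff,
      Finset.mem_singleton] at hy
    funext j
    by_cases hj : j = l
    · subst hj; simp
    · rw [Function.update_of_ne hj]
      exact (hy j hj).symm
  refine Finset.sum_nbij' (fun y => y l) (fun b => Function.update x l b) ?_ ?_ ?_ ?_ ?_
  · intro y _; exact Finset.mem_univ _
  · intro b _
    simp only [Finset.mem_filter, Finset.mem_univ, true_and, Finset.mem_sdiff,
      Finset.mem_singleton]
    intro j hj
    exact Function.update_of_ne hj _ _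
  · intro y hy; exact key y hy
  · intro b _; simp
  · intro y hy; exact (congrArg p (key y hy)).symm

lemma marg_compl_two (k l : V) (hkl : k ≠ l) (x : ∀ j, X j) :
    marg p (Finset.univ \ {k, l}) x
      = ∑ z : X k × X l, p (Function.update (Function.update x k z.1) l z.2) := by
  unfold marg
  have key : ∀ y ∈ Finset.univ.filter
      (fun y : ∀ j, X j => ∀ j ∈ Finset.univ \ {k, l}, y j = x j),
      Function.update (Function.update x k (y k)) l (y l) = y := by
    intro y hy
    simp only [Finset.mem_filter, Finset.mem_univ, true_and, Finset.mem_sdiff,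
      Finset.mem_insert, Finset.mem_singleton] at hy
    funext j
    by_cases hjl : j = l
    · subst hjl; simp
    · rw [Function.update_of_ne hjl]
      by_cases hjk : j = k
      · subst hjk; simp
      · rw [Function.update_of_ne hjk]
        exact (hy j (by push_neg; exact ⟨hjk, hjl⟩)).symm
  refine Finset.sum_nbij' (fun y => ((y k, y l) : X k × X l))
    (fun z => Function.update (Function.update x k z.1) l z.2) ?_ ?_ ?_ ?_ ?_
  · intro y _; exact Finset.mem_univ _
  · intro z _
    simp only [Finset.mem_filter, Finset.mem_univ, true_and, Finset.mem_sdiff,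
      Finset.mem_insert, Finset.mem_singleton]
    intro j hj
    push_neg at hj
    rw [Function.update_of_ne hj.2, Function.update_of_ne hj.1]
  · intro y hy; exact key y hy
  · intro z _
    simp [Function.update_apply, hkl]
  · intro y hy; exact (congrArg p (key y hy)).symm

end Aux

/-- a distribution satisfying the log-linear restrictions of a contextual
Markov network structure `(G, 𝒞)` (graph-induced zeros plus the edge-context restrictions
of Proposition 2) satisfies the pairwise Markov property of the underlying graph `G`. -/
theorem cmn_satisfies_pairwise_markov [∀ j, Zero (X j)]
    (G : SimpleGraph V) [DecidableRel G.Adj]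
    (p : (∀ j, X j) → ℝ) (hp : ∀ x, 0 < p x) (hps : ∑ x : ∀ j, X j, p x = 1)
    (φ : Finset V → (∀ j, X j) → ℝ)
    (hloc : ∀ A : Finset V, ∀ x y : ∀ j, X j, (∀ j ∈ A, x j = y j) → φ A x = φ A y)
    (hzero : ∀ A : Finset V, ∀ x : ∀ j, X j, (∃ j ∈ A, x j = 0) → φ A x = 0)
    (hexp : ∀ x : ∀ j, X j, Real.log (p x) = ∑ A : Finset V, φ A x)
    (ctxt : ∀ i j : V, Set (∀ l, X l))
    (hgraph : ∀ A : Finset V, (∃ k ∈ A, ∃ l ∈ A, k ≠ l ∧ ¬ G.Adj k l) →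
      ∀ x : ∀ j, X j, φ A x = 0)
    (hctxt : ∀ i j : V, G.Adj i j → ∀ x' ∈ ctxt i j,
      ∀ xi : X i, xi ≠ 0 → ∀ xj : X j, xj ≠ 0 →
        ctxtSum φ i j (G.neighborFinset i ∩ G.neighborFinset j) x' xi xj = 0) :
    ∀ k l : V, k ≠ l → ¬ G.Adj k l →
      CondIndep p {k} {l} (Finset.univ \ {k, l}) := by
  intro k l hkl hadj x
  have hlk : l ≠ k := hkl.symm
  have hU1 : ({k} : Finset V) ∪ {l} ∪ (Finset.univ \ {k, l}) = Finset.univ := by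
    ext j
    by_cases hjk : j = k
    · subst hjk; simp
    · by_cases hjl : j = l
      · subst hjl; simp
      · simp [hjk, hjl]
  have hU2 : ({k} : Finset V) ∪ (Finset.univ \ {k, l}) = Finset.univ \ {l} := by
    ext j
    by_cases hjk : j = k
    · subst hjk; simp [hkl]
    · by_cases hjl : j = l
      · subst hjl; simp [hlk]
      · simp [hjk, hjl]
  have hU3 : ({l} : Finset V) ∪ (Finset.univ \ {k, l}) = Finset.univ \ {k} := by
    ext j
    by_cases hjk : j = k
    · subst hjk; simp [hkl]
    · by_cases hjl : j = l
      · subst hjl; simp [hlk]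
      · simp [hjk, hjl]
  set f : (∀ j, X j) → ℝ :=
    fun y => Real.exp (∑ A ∈ Finset.univ.filter (fun A : Finset V => l ∉ A), φ A y) with hf
  set g : (∀ j, X j) → ℝ :=
    fun y => Real.exp (∑ A ∈ Finset.univ.filter (fun A : Finset V => l ∈ A), φ A y) with hg
  have hfg : ∀ y, p y = g y * f y := by
    intro y
    have h1 : p y = Real.exp (Real.log (p y)) := (Real.exp_log (hp y)).symm
    rw [h1, hexp y,
      ← Finset.sum_filter_add_sum_filter_not Finset.univ (fun A : Finset V => l ∈ A),
      Real.exp_add]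
  have hf_upd : ∀ y b, f (Function.update y l b) = f y := by
    intro y b
    simp only [hf]
    congr 1
    refine Finset.sum_congr rfl ?_
    intro A hA
    simp only [Finset.mem_filter] at hA
    refine hloc A _ _ ?_
    intro j hj
    have hjl : j ≠ l := by rintro rfl; exact hA.2 hj
    exact Function.update_of_ne hjl _ _
  have hg_upd : ∀ y a, g (Function.update y k a) = g y := by
    intro y a
    simp only [hg]
    congr 1
    refine Finset.sum_congr rfl ?_
    intro A hA
    simp only [Finset.mem_filter] at hA
    by_cases hk : k ∈ A
    · rw [hgraph A ⟨k, hk, l, hA.2, hkl, hadj⟩, hgraph A ⟨k, hk, l, hA.2, hkl, hadj⟩]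
    · refine hloc A _ _ ?_
      intro j hj
      have hjk : j ≠ k := by rintro rfl; exact hk hj
      exact Function.update_of_ne hjk _ _
  rw [hU1, hU2, hU3, marg_univ, marg_compl_one, marg_compl_one, marg_compl_two p k l hkl]
  have hsplit : ∀ z : X k × X l,
      p (Function.update (Function.update x k z.1) l z.2)
        = g (Function.update x l z.2) * f (Function.update x k z.1) := by
    intro z
    rw [hfg, hf_upd]
    congr 1
    rw [Function.update_comm hkl, hg_upd]
  have h2 : ∑ z : X k × X l, p (Function.update (Function.update x k z.1) l z.2)
      = (∑ b : X l, g (Function.update x l b)) * (∑ a : X k, f (Function.update x k a)) := by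
    have e1 : ∑ z : X k × X l, p (Function.update (Function.update x k z.1) l z.2)
        = ∑ a : X k, ∑ b : X l, g (Function.update x l b) * f (Function.update x k a) := by
      rw [Fintype.sum_prod_type]
      exact Finset.sum_congr rfl fun a _ => Finset.sum_congr rfl fun b _ => hsplit (a, b)
    rw [e1]
    simp only [← Finset.sum_mul, ← Finset.mul_sum]
  have h3 : ∑ a : X k, p (Function.update x k a)
      = g x * ∑ a : X k, f (Function.update x k a) := by
    rw [Finset.mul_sum]
    refine Finset.sum_congr rfl (fun a _ => ?_)
    rw [hfg, hg_upd]
  have h4 : ∑ b : X l, p (Function.update x l b)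
      = (∑ b : X l, g (Function.update x l b)) * f x := by
    rw [Finset.sum_mul]
    refine Finset.sum_congr rfl (fun b _ => ?_)
    rw [hfg, hf_upd]
  rw [h2, h4, h3, hfg x]
  ring
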